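/- arXiv:1202.3869 — 2 statements merged into one kernel-verified Lean document; each statement's English description precedes it below -/
import Mathlib

section
/- Let L : ℝⁿ\{0} → ℝ be smooth, positively 2-homogeneous, with vertical Hessian g of signature (−,+,…,+). Then the set T⁺ = {y ≠ 0 : L(y) < 0} of timelike vectors is open, and each connected component of T⁺ is a convex cone (closed under positive scalar multiplication and under addition of vectors in the same component). -/
def minkowskiForm (n : ℕ) (u v : Fin n → ℝ) : ℝ :=
  ∑ i : Fin n, (if (i : ℕ) = 0 then (-1:ℝ) else 1) * u i * v i

lemma mink_split {n : ℕ} (hn : 0 < n) (u v : Fin n → ℝ) :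
    minkowskiForm n u v = -(u ⟨0, hn⟩ * v ⟨0, hn⟩)
      + ∑ i ∈ Finset.univ.erase (⟨0, hn⟩ : Fin n), u i * v i := by
  unfold minkowskiForm
  rw [← Finset.add_sum_erase _ _ (Finset.mem_univ (⟨0, hn⟩ : Fin n))]
  congr 1
  · simp
  · refine Finset.sum_congr rfl fun i hi => ?_
    rw [if_neg fun h => (Finset.mem_erase.mp hi).1 (Fin.ext h), one_mul]

lemma mink_key {n : ℕ} (hn : 0 < n) {a b : Fin n → ℝ}
    (haa : minkowskiForm n a a < 0) (hab : minkowskiForm n a b = 0) (hb : b ≠ 0) :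
    0 < minkowskiForm n b b := by
  set i₀ : Fin n := ⟨0, hn⟩
  rw [mink_split hn] at haa hab ⊢
  set S := Finset.univ.erase i₀ with hS
  set α := a i₀; set β := b i₀
  have hSaa : ∑ i ∈ S, a i * a i < α * α := by linarith
  have hSaann : 0 ≤ ∑ i ∈ S, a i * a i :=
    Finset.sum_nonneg fun i _ => mul_self_nonneg _
  have hα : α ≠ 0 := by
    rintro h0
    rw [h0] at hSaa; nlinarith
  have hab' : α * β = ∑ i ∈ S, a i * b i := by linarith
  have hCS : (∑ i ∈ S, a i * b i) ^ 2 ≤ (∑ i ∈ S, a i ^ 2) * ∑ i ∈ S, b i ^ 2 :=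
    Finset.sum_mul_sq_le_sq_mul_sq S a b
  have hsq : ∀ c : Fin n → ℝ, ∑ i ∈ S, c i ^ 2 = ∑ i ∈ S, c i * c i := by
    intro c; refine Finset.sum_congr rfl fun i _ => sq (c i) ▸ by ring
  rw [hsq, hsq] at hCS
  have hSbbnn : 0 ≤ ∑ i ∈ S, b i * b i :=
    Finset.sum_nonneg fun i _ => mul_self_nonneg _
  have hSbb : 0 < ∑ i ∈ S, b i * b i := by
    rcases hSbbnn.lt_or_eq with h | h
    · exact h
    · exfalso
      have hz : ∀ i ∈ S, b i = 0 := by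
        intro i hi
        have := (Finset.sum_eq_zero_iff_of_nonneg
          (fun i _ => mul_self_nonneg (b i))).mp h.symm i hi
        exact mul_self_eq_zero.mp this
      have hab0 : ∑ i ∈ S, a i * b i = 0 :=
        Finset.sum_eq_zero fun i hi => by rw [hz i hi, mul_zero]
      have hβ : β = 0 := by
        have := hab'.trans hab0
        exact (mul_eq_zero.mp this).resolve_left hα
      apply hb
      funext i
      by_cases hi : i = i₀
      · rw [hi]; exact hβ
      · exact hz i (Finset.mem_erase.mpr ⟨hi, Finset.mem_univ i⟩)
  have hαα : 0 < α * α := mul_self_pos.mpr hα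
  have h1 : α*α*(β*β) < α*α*(∑ i ∈ S, b i * b i) := by
    calc α*α*(β*β) = (α*β)^2 := by ring
    _ = (∑ i ∈ S, a i * b i)^2 := by rw [hab']
    _ ≤ (∑ i ∈ S, a i * a i) * ∑ i ∈ S, b i * b i := hCS
    _ < α*α*(∑ i ∈ S, b i * b i) := mul_lt_mul_of_pos_right hSaa hSbb
  have := lt_of_mul_lt_mul_left h1 hαα.le
  linarith

lemma deriv_pos_right (g : ℝ → ℝ) (m t₀ : ℝ) (hm : 0 < m) (hg0 : g t₀ = 0)
    (hd : HasDerivAt g m t₀) : ∃ δ > 0, ∀ t, t₀ < t → t < t₀ + δ → 0 < g t := by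
  have h := (hasDerivAt_iff_isLittleO.mp hd)
  have h2 := Asymptotics.isLittleO_iff.mp h (half_pos hm)
  rw [Metric.eventually_nhds_iff] at h2
  obtain ⟨δ, hδ, hb⟩ := h2
  refine ⟨δ, hδ, fun t ht1 ht2 => ?_⟩
  have hdist : dist t t₀ < δ := by
    rw [Real.dist_eq, abs_of_pos (by linarith)]; linarith
  have := hb hdist
  rw [hg0, sub_zero, Real.norm_eq_abs, Real.norm_eq_abs, smul_eq_mul] at this
  have habs : |g t - (t - t₀) * m| ≤ m / 2 * |t - t₀| := this
  rw [abs_of_pos (by linarith : (0:ℝ) < t - t₀)] at habs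
  have := abs_le.mp habs
  nlinarith [this.1, this.2]

set_option maxHeartbeats 2000000 in
/-- For a Beem Finsler spacetime Lagrangian (smooth, positively 2-homogeneous, with
vertical Hessian everywhere linearly isometric to the Minkowski form of signature
`(−,+,…,+)`), the set `T⁺ = {y ≠ 0 : L(y) < 0}` of timelike vectors is open, and each
connected component of `T⁺` is a convex cone: it is closed under multiplication by
positive scalars and under addition of vectors in the same component. -/
theorem timelike_cone_open_and_components_convex_cones (n : ℕ) (L : (Fin n → ℝ) → ℝ)
    (hsmooth : ContDiffOn ℝ (⊤ : ℕ∞) L {y : Fin n → ℝ | y ≠ 0})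
    (hhom : ∀ k : ℝ, 0 < k → ∀ y : Fin n → ℝ, y ≠ 0 → L (k • y) = k ^ 2 * L y)
    (hsig : ∀ y : Fin n → ℝ, y ≠ 0 → ∃ φ : (Fin n → ℝ) ≃ₗ[ℝ] (Fin n → ℝ),
      ∀ u v : Fin n → ℝ,
        ((fderiv ℝ (fun z => fderiv ℝ L z) y) u) v = minkowskiForm n (φ u) (φ v)) :
    IsOpen {y : Fin n → ℝ | y ≠ 0 ∧ L y < 0} ∧
    ∀ v ∈ {y : Fin n → ℝ | y ≠ 0 ∧ L y < 0},
      (∀ k : ℝ, 0 < k →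
        k • v ∈ connectedComponentIn {y : Fin n → ℝ | y ≠ 0 ∧ L y < 0} v) ∧
      (∀ w ∈ connectedComponentIn {y : Fin n → ℝ | y ≠ 0 ∧ L y < 0} v,
        v + w ∈ connectedComponentIn {y : Fin n → ℝ | y ≠ 0 ∧ L y < 0} v) := by
  rcases Nat.eq_zero_or_pos n with hn | hn
  · subst hn
    have hempty : {y : Fin 0 → ℝ | y ≠ 0 ∧ L y < 0} = ∅ :=
      Set.eq_empty_iff_forall_notMem.mpr fun y hy => hy.1 (funext fun i => i.elim0)
    constructor
    · rw [hempty]; exact isOpen_empty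
    · intro v hv
      exact ((Set.eq_empty_iff_forall_notMem.mp hempty v) hv).elim
  -- main case
  set T : Set (Fin n → ℝ) := {y | y ≠ 0 ∧ L y < 0} with hTdef
  set Ω : Set (Fin n → ℝ) := {y | y ≠ 0} with hΩdef
  have hΩ : IsOpen Ω := isOpen_ne
  have hmem : ∀ y : Fin n → ℝ, y ≠ 0 → Ω ∈ nhds y := fun y hy => hΩ.mem_nhds hy
  have hdiffL : ∀ y : Fin n → ℝ, y ≠ 0 → DifferentiableAt ℝ L y := fun y hy =>
    (hsmooth.contDiffAt (hmem y hy)).differentiableAt (by simp)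
  have hcontL : ∀ y : Fin n → ℝ, y ≠ 0 → ContinuousAt L y := fun y hy =>
    (hdiffL y hy).continuousAt
  set F : (Fin n → ℝ) → ((Fin n → ℝ) →L[ℝ] ℝ) := fun z => fderiv ℝ L z with hFdef
  have hFsm : ContDiffOn ℝ (⊤ : ℕ∞) F Ω := hsmooth.fderiv_of_isOpen hΩ (by simp)
  have hdiffF : ∀ y : Fin n → ℝ, y ≠ 0 → DifferentiableAt ℝ F y := fun y hy =>
    (hFsm.contDiffAt (hmem y hy)).differentiableAt (by simp)
  -- Euler identity
  have hE1 : ∀ y : Fin n → ℝ, y ≠ 0 → F y y = 2 * L y := by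
    intro y hy
    have hc : HasDerivAt (fun k : ℝ => k • y) y 1 := by
      simpa using (hasDerivAt_id (1:ℝ)).smul_const y
    have h1 : HasDerivAt (fun k : ℝ => L (k • y)) (F y y) 1 := by
      have hL : HasFDerivAt L (F y) ((1:ℝ) • y) := by
        rw [one_smul]; exact (hdiffL y hy).hasFDerivAt
      have := hL.comp_hasDerivAt 1 hc
      exact this
    have h2 : HasDerivAt (fun k : ℝ => k ^ 2 * L y) (2 * L y) 1 := by
      simpa using (hasDerivAt_pow 2 (1:ℝ)).mul_const (L y)
    have heq : (fun k : ℝ => L (k • y)) =ᶠ[nhds (1:ℝ)] (fun k : ℝ => k ^ 2 * L y) := by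
      filter_upwards [Ioi_mem_nhds (zero_lt_one)] with k hk
      exact hhom k hk y hy
    exact (h1.congr_of_eventuallyEq heq.symm).unique h2
  -- homogeneity of the differential
  have hFhom : ∀ k : ℝ, 0 < k → ∀ y : Fin n → ℝ, y ≠ 0 → F (k • y) = k • F y := by
    intro k hk y hy
    have hky : k • y ≠ 0 := smul_ne_zero hk.ne' hy
    have hsc : HasFDerivAt (fun z : Fin n → ℝ => k • z)
        (k • ContinuousLinearMap.id ℝ (Fin n → ℝ)) y := (hasFDerivAt_id y).const_smul k
    have h1 : HasFDerivAt (fun z : Fin n → ℝ => L (k • z))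
        ((F (k • y)).comp (k • ContinuousLinearMap.id ℝ (Fin n → ℝ))) y :=
      ((hdiffL _ hky).hasFDerivAt).comp y hsc
    have h2 : HasFDerivAt (fun z : Fin n → ℝ => k ^ 2 * L z) ((k ^ 2) • F y) y :=
      ((hdiffL y hy).hasFDerivAt).const_smul (k ^ 2)
    have heq : (fun z : Fin n → ℝ => L (k • z)) =ᶠ[nhds y] (fun z => k ^ 2 * L z) := by
      filter_upwards [hmem y hy] with z hz
      exact hhom k hk z hz
    have h3 := (h1.congr_of_eventuallyEq heq.symm).unique h2
    ext u
    have := congrArg (fun (T : (Fin n → ℝ) →L[ℝ] ℝ) => T u) h3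
    simp only [ContinuousLinearMap.comp_apply, ContinuousLinearMap.smul_apply,
      ContinuousLinearMap.coe_id', id_eq, smul_eq_mul] at this ⊢
    have : k * (F (k • y)) u = k ^ 2 * (F y) u := by simpa [mul_comm] using this
    field_simp at this ⊢
    nlinarith [this]
  -- radial derivative of F
  have hE2 : ∀ y : Fin n → ℝ, y ≠ 0 → (fderiv ℝ F y) y = F y := by
    intro y hy
    have hc : HasDerivAt (fun k : ℝ => k • y) y 1 := by
      simpa using (hasDerivAt_id (1:ℝ)).smul_const y
    have hF1 : HasFDerivAt F (fderiv ℝ F y) ((1:ℝ) • y) := by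
      rw [one_smul]; exact (hdiffF y hy).hasFDerivAt
    have h1 : HasDerivAt (fun k : ℝ => F (k • y)) ((fderiv ℝ F y) y) 1 := by
      exact hF1.comp_hasDerivAt 1 hc
    have h2 : HasDerivAt (fun k : ℝ => k • F y) (F y) 1 := by
      simpa using (hasDerivAt_id (1:ℝ)).smul_const (F y)
    have heq : (fun k : ℝ => F (k • y)) =ᶠ[nhds (1:ℝ)] (fun k : ℝ => k • F y) := by
      filter_upwards [Ioi_mem_nhds (zero_lt_one)] with k hk
      exact hFhom k hk y hy
    exact (h1.congr_of_eventuallyEq heq.symm).unique h2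
  have hTsub : T ⊆ Ω := fun y hy => hy.1
  -- openness of T
  have hTopen : IsOpen T := by
    have : T = Ω ∩ L ⁻¹' (Set.Iio 0) := by
      ext y; exact ⟨fun h => ⟨h.1, h.2⟩, fun h => ⟨h.1, h.2⟩⟩
    rw [this]
    exact hsmooth.continuousOn.isOpen_inter_preimage hΩ isOpen_Iio
  -- rays stay in the same component
  have hray : ∀ p : Fin n → ℝ, p ∈ T → ∀ k : ℝ, 0 < k →
      k • p ∈ connectedComponentIn T p := by
    intro p hp k hk
    have hcont : Continuous fun s : ℝ => s • p := continuous_id.smul continuous_const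
    have hcon : IsPreconnected ((fun s : ℝ => s • p) '' Set.Ioi 0) :=
      isPreconnected_Ioi.image _ hcont.continuousOn
    have hsub : (fun s : ℝ => s • p) '' Set.Ioi 0 ⊆ T := by
      rintro _ ⟨s, hs, rfl⟩
      have hs0 : (0:ℝ) < s := hs
      refine ⟨smul_ne_zero hs0.ne' hp.1, ?_⟩
      rw [hhom s hs0 p hp.1]
      exact mul_neg_of_pos_of_neg (pow_pos hs0 2) hp.2
    have hpmem : p ∈ (fun s : ℝ => s • p) '' Set.Ioi 0 :=
      ⟨1, Set.mem_Ioi.mpr zero_lt_one, one_smul ℝ p⟩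
    exact hcon.subset_connectedComponentIn hpmem hsub ⟨k, hk, rfl⟩
  -- lower bound from the sphere
  obtain ⟨c, hc_low⟩ : ∃ c : ℝ, ∀ z : Fin n → ℝ, z ≠ 0 → c * ‖z‖ ^ 2 ≤ L z := by
    have hsph : IsCompact (Metric.sphere (0 : Fin n → ℝ) 1) := isCompact_sphere 0 1
    have hne : (Metric.sphere (0 : Fin n → ℝ) 1).Nonempty := by
      refine ⟨Pi.single ⟨0, hn⟩ (1:ℝ), ?_⟩
      rw [Metric.mem_sphere, dist_zero_right]
      simp [Pi.norm_single]
    have hconts : ContinuousOn L (Metric.sphere (0 : Fin n → ℝ) 1) := by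
      intro x hx
      have hx0 : x ≠ 0 := by
        intro h; rw [Metric.mem_sphere, dist_zero_right, h, norm_zero] at hx
        exact one_ne_zero hx.symm
      exact (hcontL x hx0).continuousWithinAt
    obtain ⟨xm, hxm, hmin⟩ := hsph.exists_isMinOn hne hconts
    refine ⟨L xm, fun z hz => ?_⟩
    have hnz : (0:ℝ) < ‖z‖ := norm_pos_iff.mpr hz
    have hunit : ‖z‖⁻¹ • z ≠ 0 := smul_ne_zero (inv_ne_zero hnz.ne') hz
    have hmemsph : ‖z‖⁻¹ • z ∈ Metric.sphere (0 : Fin n → ℝ) 1 := by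
      rw [Metric.mem_sphere, dist_zero_right, norm_smul, norm_inv, norm_norm]
      field_simp
    have h1 : L xm ≤ L (‖z‖⁻¹ • z) := hmin hmemsph
    have h2 : L (‖z‖ • (‖z‖⁻¹ • z)) = ‖z‖ ^ 2 * L (‖z‖⁻¹ • z) := hhom ‖z‖ hnz _ hunit
    rw [smul_inv_smul₀ hnz.ne'] at h2
    nlinarith [pow_pos hnz 2]
  -- segment maximum principle
  have hbound : ∀ p q : Fin n → ℝ, segment ℝ p q ⊆ T →
      ∀ z ∈ segment ℝ p q, L z ≤ max (L p) (L q) := by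
    intro p q hseg z hz
    by_cases hu0 : q - p = 0
    · have hqp : q = p := by rwa [sub_eq_zero] at hu0
      rw [hqp, segment_same] at hz
      rw [Set.mem_singleton_iff] at hz
      rw [hz]; exact le_max_left _ _
    set u : Fin n → ℝ := q - p with hu
    set σ : ℝ → (Fin n → ℝ) := fun t => p + t • u with hσ
    have hσseg : ∀ t ∈ Set.Icc (0:ℝ) 1, σ t ∈ segment ℝ p q := by
      intro t ht
      rw [segment_eq_image']
      exact ⟨t, ht, rfl⟩
    have hσT : ∀ t ∈ Set.Icc (0:ℝ) 1, σ t ≠ 0 ∧ L (σ t) < 0 := fun t ht =>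
      hseg (hσseg t ht)
    have hσd : ∀ t : ℝ, HasDerivAt σ u t := by
      intro t
      have := ((hasDerivAt_id t).smul_const u).const_add p
      rw [one_smul] at this; exact this
    set f : ℝ → ℝ := fun t => L (σ t) with hf
    set g : ℝ → ℝ := fun t => F (σ t) u with hg
    have hfd : ∀ t : ℝ, σ t ≠ 0 → HasDerivAt f (g t) t := by
      intro t ht
      exact ((hdiffL _ ht).hasFDerivAt).comp_hasDerivAt t (hσd t)
    have hgd : ∀ t : ℝ, σ t ≠ 0 → HasDerivAt g (((fderiv ℝ F (σ t)) u) u) t := by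
      intro t ht
      have h1 : HasDerivAt (fun s => F (σ s)) ((fderiv ℝ F (σ t)) u) t :=
        ((hdiffF _ ht).hasFDerivAt).comp_hasDerivAt t (hσd t)
      have := h1.clm_apply (hasDerivAt_const t u)
      simpa using this
    have hkey : ∀ t ∈ Set.Icc (0:ℝ) 1, f t ≤ max (f 0) (f 1) := by
      by_contra hcon
      push_neg at hcon
      obtain ⟨tb, htb, htbgt⟩ := hcon
      have hfc : ContinuousOn f (Set.Icc (0:ℝ) 1) := by
        intro t ht
        have : ContinuousAt f t :=
          (hcontL _ (hσT t ht).1).comp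
            ((continuous_const.add (continuous_id.smul continuous_const)).continuousAt)
        exact this.continuousWithinAt
      obtain ⟨t₀, ht₀mem, ht₀max⟩ :=
        isCompact_Icc.exists_isMaxOn (Set.nonempty_Icc.mpr zero_le_one) hfc
      have hmaxval : max (f 0) (f 1) < f t₀ := lt_of_lt_of_le htbgt (ht₀max htb)
      have ht₀0 : t₀ ≠ 0 := by
        intro h; rw [h] at hmaxval
        exact absurd (le_max_left (f 0) (f 1)) (not_le.mpr hmaxval)
      have ht₀1 : t₀ ≠ 1 := by
        intro h; rw [h] at hmaxval
        exact absurd (le_max_right (f 0) (f 1)) (not_le.mpr hmaxval)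
      have ht₀Ioo : t₀ ∈ Set.Ioo (0:ℝ) 1 :=
        ⟨lt_of_le_of_ne ht₀mem.1 (Ne.symm ht₀0), lt_of_le_of_ne ht₀mem.2 ht₀1⟩
      have hloc : IsLocalMax f t₀ := ht₀max.isLocalMax (Icc_mem_nhds ht₀Ioo.1 ht₀Ioo.2)
      have hg0 : g t₀ = 0 := by
        have hd := hfd t₀ (hσT t₀ ht₀mem).1
        have := hloc.deriv_eq_zero
        rwa [hd.deriv] at this
      set p₀ : Fin n → ℝ := σ t₀ with hp₀
      have hp₀T := hσT t₀ ht₀mem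
      obtain ⟨φ, hφ⟩ := hsig p₀ hp₀T.1
      have haa : minkowskiForm n (φ p₀) (φ p₀) < 0 := by
        rw [← hφ p₀ p₀, hE2 p₀ hp₀T.1, hE1 p₀ hp₀T.1]
        linarith [hp₀T.2]
      have hab : minkowskiForm n (φ p₀) (φ u) = 0 := by
        rw [← hφ p₀ u, hE2 p₀ hp₀T.1]
        exact hg0
      have hbne : φ u ≠ 0 := by
        intro h
        exact hu0 (by simpa using (LinearEquiv.map_eq_zero_iff φ).mp h)
      have hbb : 0 < minkowskiForm n (φ u) (φ u) := mink_key hn haa hab hbne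
      have hgd' : HasDerivAt g (minkowskiForm n (φ u) (φ u)) t₀ := by
        have := hgd t₀ hp₀T.1
        rwa [hφ u u] at this
      obtain ⟨δ, hδ, hgpos⟩ := deriv_pos_right g _ t₀ hbb hg0 hgd'
      set t₁ : ℝ := t₀ + (min δ (1 - t₀)) / 2 with ht₁
      have hminpos : 0 < min δ (1 - t₀) := lt_min hδ (by linarith [ht₀Ioo.2])
      have ht₁gt : t₀ < t₁ := by simp only [ht₁]; linarith
      have ht₁le : t₁ ≤ 1 := by
        have : (min δ (1 - t₀)) / 2 ≤ (1 - t₀) / 2 := by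
          have := min_le_right δ (1 - t₀); linarith
        simp only [ht₁]; linarith [ht₀Ioo.2]
      have ht₁lt : t₁ < t₀ + δ := by
        have : (min δ (1 - t₀)) / 2 < δ := by
          have := min_le_left δ (1 - t₀); linarith
        simp only [ht₁]; linarith
      have hIccsub : Set.Icc t₀ t₁ ⊆ Set.Icc (0:ℝ) 1 := fun s hs =>
        ⟨le_trans ht₀mem.1 hs.1, le_trans hs.2 ht₁le⟩
      have hmono : StrictMonoOn f (Set.Icc t₀ t₁) := by
        refine strictMonoOn_of_deriv_pos (convex_Icc t₀ t₁) (hfc.mono hIccsub) ?_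
        intro x hx
        rw [interior_Icc] at hx
        have hxmem : x ∈ Set.Icc (0:ℝ) 1 := hIccsub ⟨hx.1.le, hx.2.le⟩
        have hd := hfd x (hσT x hxmem).1
        rw [hd.deriv]
        exact hgpos x hx.1 (lt_trans hx.2 ht₁lt)
      have hlt : f t₀ < f t₁ :=
        hmono (Set.left_mem_Icc.mpr ht₁gt.le) (Set.right_mem_Icc.mpr ht₁gt.le) ht₁gt
      have hle : f t₁ ≤ f t₀ := ht₀max (hIccsub (Set.right_mem_Icc.mpr ht₁gt.le))
      linarith
    rw [segment_eq_image'] at hz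
    obtain ⟨t, ht, rfl⟩ := hz
    have h0 : f 0 = L p := by simp [hf, hσ]
    have h1 : f 1 = L q := by simp [hf, hσ, hu]
    have := hkey t ht
    rwa [h0, h1] at this
  refine ⟨hTopen, fun v hv => ⟨fun k hk => hray v hv k hk, ?_⟩⟩
  intro w hw
  have hvT : v ∈ T := hv
  have hcneg : c < 0 := by
    have h := hc_low v hv.1
    have h2 : 0 < ‖v‖ ^ 2 := pow_pos (norm_pos_iff.mpr hv.1) 2
    nlinarith [hv.2]
  set C : Set (Fin n → ℝ) := connectedComponentIn T v with hC
  have hCopen : IsOpen C := hTopen.connectedComponentIn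
  have hCsub : C ⊆ T := connectedComponentIn_subset T v
  have hCpre : IsPreconnected C := isPreconnected_connectedComponentIn
  set V : Set (Fin n → ℝ) := {y | segment ℝ v y ⊆ T} with hV
  have hVopen : IsOpen V := by
    rw [Metric.isOpen_iff]
    intro y hy
    have hyV : segment ℝ v y ⊆ T := hy
    have hK : IsCompact (segment ℝ v y) := by
      rw [segment_eq_image']
      exact isCompact_Icc.image
        (continuous_const.add (continuous_id.smul continuous_const))
    obtain ⟨δ, hδ, hth⟩ := hK.exists_thickening_subset_open hTopen hyV
    refine ⟨δ, hδ, fun y' hy' => ?_⟩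
    intro z hz
    obtain ⟨a, b, ha, hb, hab, rfl⟩ := hz
    apply hth
    rw [Metric.mem_thickening_iff]
    refine ⟨a • v + b • y, ⟨a, b, ha, hb, hab, rfl⟩, ?_⟩
    have hdiff : a • v + b • y' - (a • v + b • y) = b • (y' - y) := by module
    rw [dist_eq_norm, hdiff, norm_smul, Real.norm_eq_abs, abs_of_nonneg hb]
    have hd : ‖y' - y‖ < δ := by
      rw [← dist_eq_norm]; exact Metric.mem_ball.mp hy'
    calc b * ‖y' - y‖ ≤ 1 * ‖y' - y‖ :=
          mul_le_mul_of_nonneg_right (by linarith) (norm_nonneg _)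
    _ = ‖y' - y‖ := one_mul _
    _ < δ := hd
  -- limits of good points are good
  have hclos : ∀ y, y ∈ C → y ∈ closure (C ∩ V) → segment ℝ v y ⊆ T := by
    intro y hyC hycl z hzseg
    obtain ⟨a, b, ha, hb, hab, rfl⟩ := hzseg
    have hyT : y ∈ T := hCsub hyC
    set m : ℝ := max (L v) (L y) with hm
    have hmneg : m < 0 := max_lt hv.2 hyT.2
    have happrox : ∀ ε > 0, ∃ y', y' ∈ C ∩ V ∧ dist y y' < ε ∧ L y' < m / 2 := by
      intro ε hε
      have hcont := hcontL y hyT.1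
      rw [Metric.continuousAt_iff] at hcont
      obtain ⟨δ₁, hδ₁, hc1⟩ := hcont (-m/2) (by linarith)
      obtain ⟨y', hy'mem, hy'd⟩ :=
        Metric.mem_closure_iff.mp hycl (min ε δ₁) (lt_min hε hδ₁)
      refine ⟨y', hy'mem, lt_of_lt_of_le hy'd (min_le_left _ _), ?_⟩
      have hdy : dist y' y < δ₁ := by
        rw [dist_comm]; exact lt_of_lt_of_le hy'd (min_le_right _ _)
      have := hc1 hdy
      rw [Real.dist_eq] at this
      have h1 := (abs_lt.mp this).2
      have h2 : L y ≤ m := le_max_right _ _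
      linarith
    have hz'T : ∀ y', y' ∈ C ∩ V → a • v + b • y' ∈ T := fun y' hy' =>
      hy'.2 ⟨a, b, ha, hb, hab, rfl⟩
    have hz'b : ∀ y', y' ∈ C ∩ V → L (a • v + b • y') ≤ max (L v) (L y') := fun y' hy' =>
      hbound v y' hy'.2 _ ⟨a, b, ha, hb, hab, rfl⟩
    have hz'norm : ∀ y' : Fin n → ℝ,
        ‖(a • v + b • y') - (a • v + b • y)‖ ≤ dist y y' := by
      intro y'
      have hdiff : (a • v + b • y') - (a • v + b • y) = b • (y' - y) := by module
      rw [hdiff, norm_smul, Real.norm_eq_abs, abs_of_nonneg hb, dist_comm, dist_eq_norm]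
      calc b * ‖y' - y‖ ≤ 1 * ‖y' - y‖ :=
            mul_le_mul_of_nonneg_right (by linarith) (norm_nonneg _)
      _ = ‖y' - y‖ := one_mul _
    have hz0 : a • v + b • y ≠ 0 := by
      intro h0
      have hroot : 0 < (m/2)/c := div_pos_iff.mpr (Or.inr ⟨by linarith, hcneg⟩)
      obtain ⟨y', hy'mem, hy'd, hy'L⟩ :=
        happrox (Real.sqrt ((m/2)/c)) (Real.sqrt_pos.mpr hroot)
      have hz'T' := hz'T y' hy'mem
      have hLz' : L (a • v + b • y') ≤ m/2 :=
        le_trans (hz'b y' hy'mem) (max_le (by linarith [le_max_left (L v) (L y)]) hy'L.le)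
      have hlow' := hc_low _ hz'T'.1
      have hn1 : (m/2)/c ≤ ‖a • v + b • y'‖^2 := by
        rw [div_le_iff_of_neg hcneg]
        nlinarith [hlow', hLz']
      have hn2 : ‖a • v + b • y'‖ < Real.sqrt ((m/2)/c) := by
        calc ‖a • v + b • y'‖ = ‖(a • v + b • y') - (a • v + b • y)‖ := by
              rw [h0, sub_zero]
        _ ≤ dist y y' := hz'norm y'
        _ < Real.sqrt ((m/2)/c) := hy'd
      nlinarith [hn1, hn2, Real.sq_sqrt hroot.le, norm_nonneg (a • v + b • y'),
        Real.sqrt_nonneg ((m/2)/c)]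
    have hzL : L (a • v + b • y) < 0 := by
      by_contra hLz
      push_neg at hLz
      have hcz := hcontL _ hz0
      rw [Metric.continuousAt_iff] at hcz
      obtain ⟨δ₂, hδ₂, hc2⟩ := hcz (-m/2) (by linarith)
      obtain ⟨y', hy'mem, hy'd, hy'L⟩ := happrox δ₂ hδ₂
      have hLz' : L (a • v + b • y') ≤ m/2 :=
        le_trans (hz'b y' hy'mem) (max_le (by linarith [le_max_left (L v) (L y)]) hy'L.le)
      have hdz : dist (a • v + b • y') (a • v + b • y) < δ₂ :=
        lt_of_le_of_lt (by rw [dist_eq_norm]; exact hz'norm y') hy'd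
      have := hc2 hdz
      rw [Real.dist_eq] at this
      have h1 := (abs_lt.mp this).1
      linarith
    exact ⟨hz0, hzL⟩
  have hsubCV : C ⊆ C ∩ V := by
    refine IsPreconnected.subset_left_of_subset_union
      (u := C ∩ V) (v := (closure (C ∩ V))ᶜ) (hCopen.inter hVopen)
      isClosed_closure.isOpen_compl ?_ ?_ ?_ hCpre
    · exact Set.disjoint_left.mpr fun x hx hx2 => hx2 (subset_closure hx)
    · intro y hy
      by_cases h : y ∈ closure (C ∩ V)
      · exact Or.inl ⟨hy, hclos y hy h⟩
      · exact Or.inr h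
    · refine ⟨v, mem_connectedComponentIn hv, mem_connectedComponentIn hv, ?_⟩
      intro z hz
      rw [segment_same, Set.mem_singleton_iff] at hz
      rw [hz]; exact hv
  have hwV : segment ℝ v w ⊆ T := (hsubCV hw).2
  have hsegC : segment ℝ v w ⊆ C :=
    ((convex_segment v w).isPreconnected).subset_connectedComponentIn
      (left_mem_segment ℝ v w) hwV
  have hzseg : (2⁻¹ : ℝ) • (v + w) ∈ segment ℝ v w :=
    ⟨2⁻¹, 2⁻¹, by norm_num, by norm_num, by norm_num, by module⟩
  have hzC : (2⁻¹ : ℝ) • (v + w) ∈ C := hsegC hzseg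
  have h2z : (2:ℝ) • ((2⁻¹ : ℝ) • (v + w)) ∈
      connectedComponentIn T ((2⁻¹ : ℝ) • (v + w)) :=
    hray _ (hCsub hzC) 2 two_pos
  rw [← connectedComponentIn_eq hzC] at h2z
  have heq2 : (2:ℝ) • ((2⁻¹ : ℝ) • (v + w)) = v + w := by module
  rwa [heq2] at h2z
end

section
/- Let λ : [0,1] → M be a causal geodesic of a Finsler spacetime (M,L), i.e. a solution of the Euler–Lagrange equations with L(λ,λ̇) = −c² ≤ 0 constant, let γ be a future-pointed timelike observer curve with g_{λ̇(1)}(λ̇(1), γ'(τ(λ))) ≠ 0, and let Λ(ε,s) be any allowed variation of λ (smooth, fixed energy −c², Λ(ε,0)=q, Λ(ε,1)=γ(τ(ε))). Then the first derivative of the arrival time vanishes: τ'(0) = 0. -/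
/-- The horizontal partial differential `∂L/∂x` of a Lagrangian `L(x,y)`. -/
noncomputable def Lx (n : ℕ) (L : (Fin n → ℝ) × (Fin n → ℝ) → ℝ)
    (x y : Fin n → ℝ) : (Fin n → ℝ) →L[ℝ] ℝ :=
  fderiv ℝ (fun x' => L (x', y)) x

/-- The vertical partial differential `∂L/∂y` of a Lagrangian `L(x,y)`. -/
noncomputable def Ly (n : ℕ) (L : (Fin n → ℝ) × (Fin n → ℝ) → ℝ)
    (x y : Fin n → ℝ) : (Fin n → ℝ) →L[ℝ] ℝ :=
  fderiv ℝ (fun y' => L (x, y')) y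

/-- The vertical Hessian (fundamental tensor) `g_{ij}(x,y) = ∂²L/∂yⁱ∂yʲ`. -/
noncomputable def gV (n : ℕ) (L : (Fin n → ℝ) × (Fin n → ℝ) → ℝ)
    (x y : Fin n → ℝ) : (Fin n → ℝ) →L[ℝ] ((Fin n → ℝ) →L[ℝ] ℝ) :=
  fderiv ℝ (fun y' => Ly n L x y') y

/-- The "only if" direction of Fermat's principle: along a causal geodesic
`λ = Λ(0,·)` (solution of the Euler–Lagrange equations with constant energy
`L(λ,λ̇) = −c² ≤ 0`), with observer curve `γ` timelike and with nonvanishing boundary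
pairing `g_{λ̇(1)}(λ̇(1), γ'(τ(λ))) ≠ 0`, every allowed variation (smooth, fixed
pointwise energy `−c²`, fixed initial point `q`, endpoint on `γ`) has stationary
arrival time: `τ'(0) = 0`. -/
theorem fermat_geodesic_is_critical (n : ℕ)
    (L : (Fin n → ℝ) × (Fin n → ℝ) → ℝ)
    (hsmooth : ContDiffOn ℝ (⊤ : ℕ∞) L {p : (Fin n → ℝ) × (Fin n → ℝ) | p.2 ≠ 0})
    (hhom : ∀ (x y : Fin n → ℝ) (k : ℝ), 0 < k → y ≠ 0 → L (x, k • y) = k ^ 2 * L (x, y))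
    (Λ : ℝ → ℝ → Fin n → ℝ)
    (hΛ : ContDiff ℝ (⊤ : ℕ∞) (fun p : ℝ × ℝ => Λ p.1 p.2))
    (hΛne : ∀ ε s : ℝ, deriv (Λ ε) s ≠ 0)
    (γ : ℝ → Fin n → ℝ) (hγ : ContDiff ℝ (⊤ : ℕ∞) γ)
    (hγtime : ∀ t : ℝ, L (γ t, deriv γ t) < 0)
    (τ : ℝ → ℝ) (hτsm : ContDiff ℝ (⊤ : ℕ∞) τ)
    (hend : ∀ ε : ℝ, Λ ε 1 = γ (τ ε))
    (q : Fin n → ℝ) (hq : ∀ ε : ℝ, Λ ε 0 = q)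
    (c : ℝ)
    (henergy : ∀ ε s : ℝ, L (Λ ε s, deriv (Λ ε) s) = -c ^ 2)
    (hEL : ∀ (v : Fin n → ℝ), ∀ s ∈ Set.Icc (0:ℝ) 1,
      deriv (fun t => Ly n L (Λ 0 t) (deriv (Λ 0) t) v) s
        = Lx n L (Λ 0 s) (deriv (Λ 0) s) v)
    (hbnd : gV n L (Λ 0 1) (deriv (Λ 0) 1) (deriv (Λ 0) 1) (deriv γ (τ 0)) ≠ 0) :
    deriv τ 0 = 0 := by
  classical
  -- joint variation map
  set f : ℝ × ℝ → (Fin n → ℝ) := fun p => Λ p.1 p.2 with hfdef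
  have hf : ContDiff ℝ (⊤ : ℕ∞) f := hΛ
  have hfd : Differentiable ℝ f := hf.differentiable (by simp)
  -- the open set where L is smooth
  set S : Set ((Fin n → ℝ) × (Fin n → ℝ)) := {p | p.2 ≠ 0} with hSdef
  have hS : IsOpen S := isOpen_compl_singleton.preimage continuous_snd
  -- partial derivative in s
  have hcurve : ∀ ε s : ℝ, HasDerivAt (Λ ε) (fderiv ℝ f (ε, s) (0, 1)) s := by
    intro ε s
    have h1 : HasDerivAt (fun t : ℝ => ((ε : ℝ), t)) ((0 : ℝ), (1 : ℝ)) s :=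
      (hasDerivAt_const s ε).prodMk (hasDerivAt_id s)
    exact (hfd (ε, s)).hasFDerivAt.comp_hasDerivAt s h1
  have hderiv_eq : ∀ ε s : ℝ, deriv (Λ ε) s = fderiv ℝ f (ε, s) (0, 1) :=
    fun ε s => (hcurve ε s).deriv
  -- partial derivative in ε
  have hVar : ∀ ε s : ℝ, HasDerivAt (fun e => Λ e s) (fderiv ℝ f (ε, s) (1, 0)) ε := by
    intro ε s
    have h1 : HasDerivAt (fun e : ℝ => (e, s)) ((1 : ℝ), (0 : ℝ)) ε :=
      (hasDerivAt_id ε).prodMk (hasDerivAt_const ε s)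
    exact (hfd (ε, s)).hasFDerivAt.comp_hasDerivAt ε h1
  -- variation vector field
  set V : ℝ → (Fin n → ℝ) := fun s => fderiv ℝ f (0, s) (1, 0) with hVdef
  -- V 0 = 0
  have hV0 : V 0 = 0 := by
    have h := hVar 0 0
    have h2 : (fun e : ℝ => Λ e 0) = fun _ => q := funext hq
    rw [h2] at h
    exact h.unique (hasDerivAt_const 0 q)
  -- V 1 = deriv τ 0 • deriv γ (τ 0)
  have hV1 : V 1 = deriv τ 0 • deriv γ (τ 0) := by
    have h := hVar 0 1
    have h2 : (fun e : ℝ => Λ e 1) = fun e => γ (τ e) := funext hend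
    rw [h2] at h
    have h3 : HasDerivAt (γ ∘ τ) (deriv τ 0 • deriv γ (τ 0)) 0 :=
      (hγ.differentiable (by simp) (τ 0)).hasDerivAt.scomp 0
        (hτsm.differentiable (by simp) 0).hasDerivAt
    exact h.unique h3
  -- the two first-order partials, as smooth functions of p
  set g : ℝ × ℝ → (Fin n → ℝ) := fun p => fderiv ℝ f p (0, 1) with hgdef
  set g1 : ℝ × ℝ → (Fin n → ℝ) := fun p => fderiv ℝ f p (1, 0) with hg1def
  have hfd' : ContDiff ℝ (⊤ : ℕ∞) (fderiv ℝ f) := hf.fderiv_right (by simp)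
  have hg : ContDiff ℝ (⊤ : ℕ∞) g := hfd'.clm_apply contDiff_const
  have hg1 : ContDiff ℝ (⊤ : ℕ∞) g1 := hfd'.clm_apply contDiff_const
  -- V is smooth
  have hιs : ∀ s₀ : ℝ, ContDiff ℝ (⊤ : ℕ∞) (fun s : ℝ => ((0 : ℝ), s)) :=
    fun _ => contDiff_const.prodMk contDiff_id
  have hVsm : ContDiff ℝ (⊤ : ℕ∞) V := hg1.comp (hιs 0)
  -- second derivative symmetry : mixed partials commute
  have hsymm : ∀ p : ℝ × ℝ,
      fderiv ℝ (fderiv ℝ f) p (1, 0) (0, 1) = fderiv ℝ (fderiv ℝ f) p (0, 1) (1, 0) := by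
    intro p
    exact second_derivative_symmetric (fun y => (hfd y).hasFDerivAt)
      ((hfd'.differentiable (by simp) p).hasFDerivAt) _ _
  -- deriv V s = fderiv g (0,s) (1,0)
  have hderivV : ∀ s : ℝ, deriv V s = fderiv ℝ g (0, s) (1, 0) := by
    intro s
    have h1 : HasDerivAt (fun t : ℝ => ((0 : ℝ), t)) ((0 : ℝ), (1 : ℝ)) s :=
      (hasDerivAt_const s (0 : ℝ)).prodMk (hasDerivAt_id s)
    have h2 : HasDerivAt V (fderiv ℝ g1 (0, s) (0, 1)) s :=
      ((hg1.differentiable (by simp)) (0, s)).hasFDerivAt.comp_hasDerivAt s h1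
    rw [h2.deriv]
    -- both are second derivatives of f
    have e1 : fderiv ℝ g1 (0, s) (0, 1) = fderiv ℝ (fderiv ℝ f) (0, s) (0, 1) (1, 0) := by
      rw [hg1def]
      rw [fderiv_clm_apply (hfd'.differentiable (by simp) (0, s)) (differentiableAt_const _)]
      simp
    have e2 : fderiv ℝ g (0, s) (1, 0) = fderiv ℝ (fderiv ℝ f) (0, s) (1, 0) (0, 1) := by
      rw [hgdef]
      rw [fderiv_clm_apply (hfd'.differentiable (by simp) (0, s)) (differentiableAt_const _)]
      simp
    rw [e1, e2, hsymm]
  -- L is differentiable at points of S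
  have hLd : ∀ p ∈ S, HasFDerivAt L (fderiv ℝ L p) p := by
    intro p hp
    exact (((hsmooth.contDiffAt (hS.mem_nhds hp)).differentiableAt (by simp))).hasFDerivAt
  -- partial differentials in terms of the total differential
  have hLy_eq : ∀ p ∈ S, Ly n L p.1 p.2
      = (fderiv ℝ L p).comp (ContinuousLinearMap.inr ℝ _ _) := by
    rintro ⟨x, y⟩ hp
    have h1 : HasFDerivAt (fun y' : Fin n → ℝ => ((x : Fin n → ℝ), y'))
        (ContinuousLinearMap.inr ℝ _ _) y := hasFDerivAt_prodMk_right x y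
    have h2 := (hLd (x, y) hp).comp y h1
    exact h2.fderiv
  have hLx_eq : ∀ p ∈ S, Lx n L p.1 p.2
      = (fderiv ℝ L p).comp (ContinuousLinearMap.inl ℝ _ _) := by
    rintro ⟨x, y⟩ hp
    have h1 : HasFDerivAt (fun x' : Fin n → ℝ => (x', (y : Fin n → ℝ)))
        (ContinuousLinearMap.inl ℝ _ _) x := hasFDerivAt_prodMk_left x y
    have h2 := (hLd (x, y) hp).comp x h1
    exact h2.fderiv
  have hsplit : ∀ p ∈ S, ∀ u v : Fin n → ℝ,
      fderiv ℝ L p (u, v) = Lx n L p.1 p.2 u + Ly n L p.1 p.2 v := by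
    intro p hp u v
    rw [hLx_eq p hp, hLy_eq p hp]
    simp only [ContinuousLinearMap.coe_comp', Function.comp_apply,
      ContinuousLinearMap.inl_apply, ContinuousLinearMap.inr_apply]
    rw [← ContinuousLinearMap.map_add]
    congr 1
    simp [Prod.ext_iff]
  -- the geodesic curve and its velocity
  have hcS : ∀ ε s : ℝ, (f (ε, s), g (ε, s)) ∈ S := by
    intro ε s
    have := hΛne ε s
    rw [hderiv_eq ε s] at this
    exact this
  -- pointwise first variation of the energy: Lx (V s) + Ly (W s) = 0
  have hvar0 : ∀ s : ℝ,
      Lx n L (Λ 0 s) (deriv (Λ 0) s) (V s)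
        + Ly n L (Λ 0 s) (deriv (Λ 0) s) (deriv V s) = 0 := by
    intro s
    -- the map ε ↦ (f(ε,s), g(ε,s))
    have hΦ : HasDerivAt (fun ε : ℝ => (f (ε, s), g (ε, s)))
        (fderiv ℝ f (0, s) (1, 0), fderiv ℝ g (0, s) (1, 0)) 0 := by
      have h1 : HasDerivAt (fun e : ℝ => (e, s)) ((1 : ℝ), (0 : ℝ)) 0 :=
        (hasDerivAt_id 0).prodMk (hasDerivAt_const 0 s)
      have h2 : HasFDerivAt (fun p : ℝ × ℝ => (f p, g p))
          ((fderiv ℝ f (0, s)).prod (fderiv ℝ g (0, s))) (0, s) :=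
        (hfd (0, s)).hasFDerivAt.prodMk ((hg.differentiable (by simp)) (0, s)).hasFDerivAt
      exact h2.comp_hasDerivAt 0 h1
    have hE : HasDerivAt (fun ε : ℝ => L (f (ε, s), g (ε, s)))
        (fderiv ℝ L (f (0, s), g (0, s)) (fderiv ℝ f (0, s) (1, 0), fderiv ℝ g (0, s) (1, 0))) 0 :=
      (hLd _ (hcS 0 s)).comp_hasDerivAt 0 hΦ
    have hconst : (fun ε : ℝ => L (f (ε, s), g (ε, s))) = fun _ => -c ^ 2 := by
      funext ε
      have := henergy ε s
      rw [hderiv_eq ε s] at this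
      exact this
    rw [hconst] at hE
    have hzero := hE.unique (hasDerivAt_const 0 (-c ^ 2))
    have hs2 := hsplit _ (hcS 0 s) (fderiv ℝ f (0, s) (1, 0)) (fderiv ℝ g (0, s) (1, 0))
    rw [hs2] at hzero
    have hxeq : f (0, s) = Λ 0 s := rfl
    have hyeq : g (0, s) = deriv (Λ 0) s := (hderiv_eq 0 s).symm
    rw [hxeq, hyeq] at hzero
    rw [hderivV s]
    rw [← hyeq] at hzero ⊢
    convert hzero using 3
  -- joint smoothness of (x,y) ↦ Ly on S
  have hLyS : ContDiffOn ℝ (⊤ : ℕ∞) (fun p : (Fin n → ℝ) × (Fin n → ℝ) => Ly n L p.1 p.2) S := by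
    have h1 : ContDiffOn ℝ (⊤ : ℕ∞)
        (fun p : (Fin n → ℝ) × (Fin n → ℝ) =>
          (fderiv ℝ L p).comp (ContinuousLinearMap.inr ℝ _ _)) S := by
      apply ContDiffOn.clm_comp (hsmooth.fderiv_of_isOpen hS (by simp)) contDiffOn_const
    exact h1.congr hLy_eq
  -- the curve s ↦ (λ(s), λ'(s)) is smooth
  have hc2 : ContDiff ℝ (⊤ : ℕ∞) (fun s : ℝ => (f (0, s), g (0, s))) :=
    (hf.comp (hιs 0)).prodMk (hg.comp (hιs 0))
  -- A s := Ly (λ s) (λ' s) is differentiable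
  have hA : ∀ s : ℝ, DifferentiableAt ℝ
      (fun t : ℝ => Ly n L (Λ 0 t) (deriv (Λ 0) t)) s := by
    intro s
    have heq : (fun t : ℝ => Ly n L (Λ 0 t) (deriv (Λ 0) t))
        = fun t : ℝ => Ly n L (f (0, t)) (g (0, t)) := by
      funext t
      rw [show Λ 0 t = f (0, t) from rfl, hderiv_eq 0 t]
    rw [heq]
    have hd1 : DifferentiableAt ℝ (fun p : (Fin n → ℝ) × (Fin n → ℝ) => Ly n L p.1 p.2)
        (f (0, s), g (0, s)) :=
      ((hLyS.contDiffAt (hS.mem_nhds (hcS 0 s))).differentiableAt (by simp))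
    exact hd1.comp s (hc2.differentiable (by simp) s)
  -- the boundary pairing function
  set φ : ℝ → ℝ := fun s => Ly n L (Λ 0 s) (deriv (Λ 0) s) (V s) with hφdef
  have hφderiv : ∀ s ∈ Set.Icc (0:ℝ) 1, HasDerivAt φ 0 s := by
    intro s hs
    have h1 : HasDerivAt φ
        (deriv (fun t : ℝ => Ly n L (Λ 0 t) (deriv (Λ 0) t)) s (V s)
          + Ly n L (Λ 0 s) (deriv (Λ 0) s) (deriv V s)) s :=
      ((hA s).hasDerivAt).clm_apply (hVsm.differentiable (by simp) s).hasDerivAt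
    have h2 : deriv (fun t : ℝ => Ly n L (Λ 0 t) (deriv (Λ 0) t)) s (V s)
        = Lx n L (Λ 0 s) (deriv (Λ 0) s) (V s) := by
      have h3 : deriv (fun t : ℝ => Ly n L (Λ 0 t) (deriv (Λ 0) t) (V s)) s
          = deriv (fun t : ℝ => Ly n L (Λ 0 t) (deriv (Λ 0) t)) s (V s) := by
        rw [deriv_clm_apply (hA s) (differentiableAt_const (V s))]
        simp
      rw [← h3]
      exact hEL (V s) s hs
    rw [h2, hvar0 s] at h1
    exact h1
  -- φ is constant on [0,1]
  have hφcont : ContinuousOn φ (Set.Icc 0 1) := by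
    intro s hs
    exact ((hA s).clm_apply (hVsm.differentiable (by simp) s)).continuousAt.continuousWithinAt
  have hφ10 : φ 1 = φ 0 :=
    constant_of_has_deriv_right_zero hφcont
      (fun x hx => ((hφderiv x (Set.Ico_subset_Icc_self hx)).hasDerivWithinAt)) 1
      (Set.right_mem_Icc.mpr zero_le_one)
  have hφ0 : φ 0 = 0 := by
    rw [hφdef]
    simp only [hV0, map_zero]
  have hφ1 : φ 1 = deriv τ 0 * Ly n L (Λ 0 1) (deriv (Λ 0) 1) (deriv γ (τ 0)) := by
    rw [hφdef]
    simp only [hV1, map_smul, smul_eq_mul]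
  have hkey : deriv τ 0 * Ly n L (Λ 0 1) (deriv (Λ 0) 1) (deriv γ (τ 0)) = 0 := by
    rw [← hφ1, hφ10, hφ0]
  -- Euler relation: gV x y y v = Ly x y v
  set x1 : Fin n → ℝ := Λ 0 1
  set y1 : Fin n → ℝ := deriv (Λ 0) 1 with hy1def
  set v1 : Fin n → ℝ := deriv γ (τ 0)
  have hy1 : y1 ≠ 0 := hΛne 0 1
  -- differentiability in y of L(x1, ·) at nonzero points
  have hLy_hasD : ∀ y : Fin n → ℝ, y ≠ 0 →
      HasFDerivAt (fun u : Fin n → ℝ => L (x1, u)) (Ly n L x1 y) y := by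
    intro y hy
    have h1 : HasFDerivAt (fun u : Fin n → ℝ => ((x1 : Fin n → ℝ), u))
        (ContinuousLinearMap.inr ℝ _ _) y := hasFDerivAt_prodMk_right x1 y
    have h2 := (hLd (x1, y) hy).comp y h1
    have h3 : Ly n L x1 y = (fderiv ℝ L (x1, y)).comp (ContinuousLinearMap.inr ℝ _ _) :=
      hLy_eq (x1, y) hy
    rw [h3]
    exact h2
  -- homogeneity of Ly : Ly x1 (k • y1) = k • Ly x1 y1 for k > 0
  have hLyhom : ∀ k : ℝ, 0 < k → Ly n L x1 (k • y1) = k • Ly n L x1 y1 := by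
    intro k hk
    have hky : k • y1 ≠ 0 := smul_ne_zero (ne_of_gt hk) hy1
    -- F1 = L(x1, k•u), derivative at y1
    have hmul : HasFDerivAt (fun u : Fin n → ℝ => k • u)
        (k • ContinuousLinearMap.id ℝ (Fin n → ℝ)) y1 :=
      (k • ContinuousLinearMap.id ℝ (Fin n → ℝ)).hasFDerivAt
    have hF1 : HasFDerivAt (fun u : Fin n → ℝ => L (x1, k • u))
        ((Ly n L x1 (k • y1)).comp (k • ContinuousLinearMap.id ℝ (Fin n → ℝ))) y1 :=
      (hLy_hasD (k • y1) hky).comp y1 hmul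
    have hF2 : HasFDerivAt (fun u : Fin n → ℝ => k ^ 2 * L (x1, u))
        (k ^ 2 • Ly n L x1 y1) y1 := (hLy_hasD y1 hy1).const_smul (k ^ 2)
    -- the two functions agree near y1
    have hEq : (fun u : Fin n → ℝ => L (x1, k • u))
        =ᶠ[nhds y1] (fun u : Fin n → ℝ => k ^ 2 * L (x1, u)) := by
      filter_upwards [IsOpen.mem_nhds (isOpen_compl_singleton) hy1] with u hu
      exact hhom x1 u k hk hu
    have h4 := (hF1.congr_of_eventuallyEq hEq.symm).unique hF2
    have h5 : (Ly n L x1 (k • y1)).comp (k • ContinuousLinearMap.id ℝ (Fin n → ℝ))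
        = k • (Ly n L x1 (k • y1)) := by
      ext w
      simp
    rw [h5] at h4
    refine smul_right_injective ((Fin n → ℝ) →L[ℝ] ℝ) (ne_of_gt hk) ?_
    show k • Ly n L x1 (k • y1) = k • (k • Ly n L x1 y1)
    rw [h4, smul_smul, sq]
  -- deriv of k ↦ Ly x1 (k•y1) v1 at 1, computed two ways
  have hEuler : gV n L x1 y1 y1 v1 = Ly n L x1 y1 v1 := by
    -- way 1: via homogeneity
    have hway1 : HasDerivAt (fun k : ℝ => Ly n L x1 (k • y1) v1) (Ly n L x1 y1 v1) 1 := by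
      have hlin : HasDerivAt (fun k : ℝ => k * (Ly n L x1 y1 v1)) (Ly n L x1 y1 v1) 1 := by
        simpa using (hasDerivAt_id (1:ℝ)).mul_const (Ly n L x1 y1 v1)
      apply hlin.congr_of_eventuallyEq
      filter_upwards [IsOpen.mem_nhds isOpen_Ioi (Set.mem_Ioi.mpr one_pos)] with k hk
      rw [hLyhom k hk]
      simp [mul_comm]
    -- way 2: via chain rule and gV
    have hway2 : HasDerivAt (fun k : ℝ => Ly n L x1 (k • y1) v1) (gV n L x1 y1 y1 v1) 1 := by
      have hdLy : DifferentiableAt ℝ (fun u : Fin n → ℝ => Ly n L x1 u) y1 := by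
        have hd1 : DifferentiableAt ℝ (fun p : (Fin n → ℝ) × (Fin n → ℝ) => Ly n L p.1 p.2)
            (x1, y1) := ((hLyS.contDiffAt (hS.mem_nhds hy1)).differentiableAt (by simp))
        exact hd1.comp y1 ((differentiableAt_const x1).prodMk differentiableAt_id)
      have hfd2 : HasFDerivAt (fun u : Fin n → ℝ => Ly n L x1 u v1)
          ((gV n L x1 y1).flip v1) y1 := by
        have := fderiv_clm_apply hdLy (differentiableAt_const v1)
        have h7 : DifferentiableAt ℝ (fun u : Fin n → ℝ => Ly n L x1 u v1) y1 :=
          hdLy.clm_apply (differentiableAt_const v1)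
        have h8 := h7.hasFDerivAt
        rw [this] at h8
        simpa [gV] using h8
      have hin : HasDerivAt (fun k : ℝ => k • y1) y1 1 := by
        simpa using (hasDerivAt_id (1:ℝ)).smul_const y1
      have hfd2' : HasFDerivAt (fun u : Fin n → ℝ => Ly n L x1 u v1)
          ((gV n L x1 y1).flip v1) ((1:ℝ) • y1) := by
        rw [one_smul]; exact hfd2
      have h9 := hfd2'.comp_hasDerivAt 1 hin
      exact h9
    exact (hway2.unique hway1)
  -- conclude
  have hne : Ly n L x1 y1 v1 ≠ 0 := by
    rw [← hEuler]
    exact hbnd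
  rcases mul_eq_zero.mp hkey with h | h
  · exact h
  · exact absurd h hne
end
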